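/- arXiv:2301.03962 — 4 statements merged into one kernel-verified Lean document; each statement's English description precedes it below -/
import Mathlib

section
/- Let Q_1, …, Q_M : Ω → ℝ be square-integrable random variables on a probability space, Q̄ = (1/M)∑_i Q_i, and y ∈ ℝ. Then E[(Q̄ − y)²] = (1/M)∑_i (E[Q_i] − y)² + (1/M)∑_i E[(Q_i − E[Q_i])²] − E[(1/M)∑_i (Q_i − Q̄)²]. -/
open MeasureTheory

lemma sq_int_aux {Ω : Type*} [MeasurableSpace Ω] {μ : Measure Ω} [IsProbabilityMeasure μ]
    {f : Ω → ℝ} (hf : MemLp f 2 μ) (c : ℝ) :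
    Integrable (fun ω => (f ω - c) ^ 2) μ :=
  (hf.sub (memLp_const c)).integrable_sq

lemma bias_var_aux {Ω : Type*} [MeasurableSpace Ω] {μ : Measure Ω} [IsProbabilityMeasure μ]
    {f : Ω → ℝ} (hf : MemLp f 2 μ) (y : ℝ) :
    ∫ ω, (f ω - y) ^ 2 ∂μ
      = ((∫ ω, f ω ∂μ) - y) ^ 2 + ∫ ω, (f ω - ∫ ω', f ω' ∂μ) ^ 2 ∂μ := by
  set m := ∫ ω, f ω ∂μ with hm
  have hint : Integrable f μ := hf.integrable (by norm_num)
  have h1 : Integrable (fun ω => (f ω - m) ^ 2) μ := sq_int_aux hf m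
  have h2 : Integrable (fun ω => f ω - m) μ := hint.sub (integrable_const m)
  have key : ∀ ω, (f ω - y) ^ 2
      = (f ω - m) ^ 2 + (2 * (m - y)) * (f ω - m) + (m - y) ^ 2 := by
    intro ω; ring
  have h3 : Integrable (fun ω => (f ω - m) ^ 2 + 2 * (m - y) * (f ω - m)) μ :=
    h1.add (h2.const_mul _)
  rw [integral_congr_ae (Filter.Eventually.of_forall key),
      integral_add h3 (integrable_const _),
      integral_add h1 (h2.const_mul _), integral_const_mul,
      integral_sub hint (integrable_const m), integral_const]
  simp
  ring

/-- Bias-variance-diversity decomposition for squared loss. -/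
theorem bias_variance_diversity_decomposition
    {Ω : Type*} [MeasurableSpace Ω] (μ : Measure Ω) [IsProbabilityMeasure μ]
    (M : ℕ) (hM : 1 ≤ M) (Q : Fin M → Ω → ℝ) (hQ : ∀ i, MemLp (Q i) 2 μ)
    (Qbar : Ω → ℝ) (hQbar : ∀ ω, Qbar ω = (∑ i, Q i ω) / M) (y : ℝ) :
    ∫ ω, (Qbar ω - y) ^ 2 ∂μ =
      (∑ i, ((∫ ω, Q i ω ∂μ) - y) ^ 2) / M
      + (∑ i, ∫ ω, (Q i ω - ∫ ω', Q i ω' ∂μ) ^ 2 ∂μ) / M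
      - ∫ ω, (∑ i, (Q i ω - Qbar ω) ^ 2) / M ∂μ := by
  have hM0 : (M : ℝ) ≠ 0 := Nat.cast_ne_zero.mpr (by omega)
  have hsum : MemLp (∑ i, Q i) 2 μ :=
    memLp_finset_sum' (μ := μ) (p := 2) Finset.univ (fun i (_ : i ∈ Finset.univ) => hQ i)
  have hQbarLp : MemLp Qbar 2 μ := by
    have h := hsum.const_mul ((M : ℝ)⁻¹)
    exact h.ae_eq (Filter.Eventually.of_forall fun ω => by
      rw [hQbar ω]; simp [Finset.sum_apply]; ring)
  -- pointwise ambiguity identity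
  have key : ∀ ω, (Qbar ω - y) ^ 2
      = (∑ i, (Q i ω - y) ^ 2) / M - (∑ i, (Q i ω - Qbar ω) ^ 2) / M := by
    intro ω
    have hS : (∑ i, Q i ω) = M * Qbar ω := by
      rw [hQbar ω]; field_simp
    have expand : ∀ c : ℝ, ∑ i, (Q i ω - c) ^ 2
        = (∑ i, (Q i ω) ^ 2) - 2 * c * (∑ i, Q i ω) + M * c ^ 2 := by
      intro c
      have : ∀ i : Fin M, (Q i ω - c) ^ 2 = (Q i ω) ^ 2 - 2 * c * Q i ω + c ^ 2 :=
        fun i => by ring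
      rw [Finset.sum_congr rfl (fun i _ => this i), Finset.sum_add_distrib,
          Finset.sum_sub_distrib, ← Finset.mul_sum, Finset.sum_const,
          Finset.card_univ, Fintype.card_fin, nsmul_eq_mul]
    rw [expand y, expand (Qbar ω), hS]
    field_simp
    ring
  have hIntSq : ∀ (i : Fin M) (c : ℝ), Integrable (fun ω => (Q i ω - c) ^ 2) μ :=
    fun i c => sq_int_aux (hQ i) c
  have hIntQbarDiff : ∀ i : Fin M, Integrable (fun ω => (Q i ω - Qbar ω) ^ 2) μ :=
    fun i => ((hQ i).sub hQbarLp).integrable_sq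
  have hIy : Integrable (fun ω => (∑ i, (Q i ω - y) ^ 2) / M) μ :=
    (integrable_finset_sum _ (fun i _ => hIntSq i y)).div_const _
  have hIQ : Integrable (fun ω => (∑ i, (Q i ω - Qbar ω) ^ 2) / M) μ :=
    (integrable_finset_sum _ (fun i _ => hIntQbarDiff i)).div_const _
  calc ∫ ω, (Qbar ω - y) ^ 2 ∂μ
      = ∫ ω, ((∑ i, (Q i ω - y) ^ 2) / M - (∑ i, (Q i ω - Qbar ω) ^ 2) / M) ∂μ := by
        exact integral_congr_ae (Filter.Eventually.of_forall key)
    _ = (∑ i, ∫ ω, (Q i ω - y) ^ 2 ∂μ) / M - ∫ ω, (∑ i, (Q i ω - Qbar ω) ^ 2) / M ∂μ := by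
        rw [integral_sub hIy hIQ, integral_div,
          integral_finset_sum _ (fun i _ => hIntSq i y)]
    _ = _ := by
        have : ∑ i, ∫ ω, (Q i ω - y) ^ 2 ∂μ
            = (∑ i, ((∫ ω, Q i ω ∂μ) - y) ^ 2)
              + ∑ i, ∫ ω, (Q i ω - ∫ ω', Q i ω' ∂μ) ^ 2 ∂μ := by
          rw [← Finset.sum_add_distrib]
          exact Finset.sum_congr rfl fun i _ => bias_var_aux (hQ i) y
        rw [this, add_div]
end

section
/- Let φ : S → ℝ be a strictly convex differentiable function on a convex open set S ⊆ ℝ^k, with Bregman divergence B_φ(p, q) = φ(p) − φ(q) − ⟨∇φ(q), p − q⟩. For any y ∈ S and q_1, …, q_M ∈ S, if q̄ ∈ S satisfies ∇φ(q̄) = (1/M)∑_i ∇φ(q_i), then B_φ(y, q̄) = (1/M)∑_i B_φ(y, q_i) − (1/M)∑_i B_φ(q̄, q_i). -/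
open RealInnerProductSpace

/-- The Bregman divergence associated to a generator `φ` with gradient map `g`. -/
noncomputable def bregman {k : ℕ} (φ : EuclideanSpace ℝ (Fin k) → ℝ)
    (g : EuclideanSpace ℝ (Fin k) → EuclideanSpace ℝ (Fin k))
    (p q : EuclideanSpace ℝ (Fin k)) : ℝ :=
  φ p - φ q - ⟪g q, p - q⟫

/-- Bregman ambiguity decomposition. -/
theorem bregman_ambiguity_decomposition
    {k M : ℕ} (hM : 1 ≤ M) (S : Set (EuclideanSpace ℝ (Fin k)))
    (hSconv : Convex ℝ S) (hSopen : IsOpen S)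
    (φ : EuclideanSpace ℝ (Fin k) → ℝ) (hφ : StrictConvexOn ℝ S φ)
    (g : EuclideanSpace ℝ (Fin k) → EuclideanSpace ℝ (Fin k))
    (hg : ∀ x ∈ S, HasGradientAt φ (g x) x)
    (y : EuclideanSpace ℝ (Fin k)) (hy : y ∈ S)
    (q : Fin M → EuclideanSpace ℝ (Fin k)) (hq : ∀ i, q i ∈ S)
    (qbar : EuclideanSpace ℝ (Fin k)) (hqbarS : qbar ∈ S)
    (hqbar : g qbar = (M : ℝ)⁻¹ • ∑ i, g (q i)) :
    bregman φ g y qbar =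
      (∑ i, bregman φ g y (q i)) / M - (∑ i, bregman φ g qbar (q i)) / M := by
  have hMpos : (0:ℝ) < M := by exact_mod_cast hM
  have key : ∀ z, ⟪g qbar, z⟫ = (M:ℝ)⁻¹ * ∑ i, ⟪g (q i), z⟫ := fun z => by
    rw [hqbar, real_inner_smul_left, sum_inner]
  simp only [bregman, inner_sub_right, Finset.sum_sub_distrib, Finset.sum_const,
    Finset.card_univ, Fintype.card_fin, nsmul_eq_mul, key]
  field_simp
  ring
end

section
/- For the Poisson loss, given targets and predictions in ℝ_{>0}, the diversity term of the bias-variance-diversity decomposition at a point equals the arithmetic mean minus the geometric mean: (1/M)∑_i B(q̄, q_i) = (1/M)∑_i q_i − (∏_i q_i)^{1/M}, where q̄ = (∏_i q_i)^{1/M} and B(p,q) = p ln(p/q) − (p − q). -/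
/-- For the Poisson loss, the diversity term equals the arithmetic mean minus
the geometric mean of the predictions. -/
theorem poisson_diversity_eq_am_sub_gm
    (M : ℕ) (hM : 1 ≤ M) (q : Fin M → ℝ) (hq : ∀ i, 0 < q i)
    (qbar : ℝ) (hqbar : qbar = (∏ i, q i) ^ ((M : ℝ)⁻¹)) :
    (∑ i, (qbar * Real.log (qbar / q i) - (qbar - q i))) / M =
      (∑ i, q i) / M - (∏ i, q i) ^ ((M : ℝ)⁻¹) := by
  have hMpos : (0:ℝ) < M := by exact_mod_cast hM
  have hprod : 0 < ∏ i, q i := Finset.prod_pos (fun i _ => hq i)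
  have hlogbar : Real.log qbar = (M:ℝ)⁻¹ * ∑ i, Real.log (q i) := by
    rw [hqbar, Real.log_rpow hprod, Real.log_prod (fun i _ => (hq i).ne')]
  have hsum : ∑ i, Real.log (qbar / q i) = 0 := by
    have hqbarpos : 0 < qbar := hqbar ▸ Real.rpow_pos_of_pos hprod _
    calc ∑ i, Real.log (qbar / q i)
        = ∑ i, (Real.log qbar - Real.log (q i)) := by
          refine Finset.sum_congr rfl fun i _ => ?_
          rw [Real.log_div hqbarpos.ne' (hq i).ne']
      _ = M * Real.log qbar - ∑ i, Real.log (q i) := by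
          rw [Finset.sum_sub_distrib, Finset.sum_const, Finset.card_univ,
            Fintype.card_fin, nsmul_eq_mul]
      _ = 0 := by rw [hlogbar]; field_simp; ring
  rw [Finset.sum_sub_distrib, ← Finset.mul_sum, hsum, mul_zero, zero_sub,
    Finset.sum_sub_distrib, Finset.sum_const, Finset.card_univ, Fintype.card_fin,
    nsmul_eq_mul, ← hqbar]
  field_simp
  ring
end

section
/- There is no bias-variance decomposition for the 0-1 loss in the following sense: there exist a finite label set S with |S| ≥ 2 and a distribution of a random prediction Q over S such that for every deterministic q* ∈ S, the quantity E[L_{0/1}(y, Q)] − L_{0/1}(y, q*) depends on the label y ∈ S (i.e., is not constant in y). -/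
/-- The 0-1 loss on a finite label set. -/
def L01 {k : ℕ} (y q : Fin k) : ℝ := if q = y then 0 else 1

/-- Non-existence of a bias-variance decomposition for the 0-1 loss: there is a
finite label set with at least two labels and a distribution over predictions
such that for every deterministic prediction `q*`, the difference between the
expected loss and the loss of `q*` is not constant in the label `y`. -/
theorem no_bias_variance_decomposition_zero_one_loss :
    ∃ (k : ℕ), 2 ≤ k ∧ ∃ P : PMF (Fin k),
      ∀ qs : Fin k, ∃ y₁ y₂ : Fin k,
        (∑ q, (P q).toReal * L01 y₁ q) - L01 y₁ qs ≠
          (∑ q, (P q).toReal * L01 y₂ q) - L01 y₂ qs := by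
  refine ⟨2, le_refl 2, PMF.uniformOfFintype (Fin 2), fun qs => ⟨0, 1, ?_⟩⟩
  fin_cases qs <;>
    norm_num [PMF.uniformOfFintype_apply, L01, Fin.sum_univ_two]
end
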